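/- arXiv:1910.11371 — 3 statements merged into one kernel-verified Lean document; each statement's English description precedes it below -/
import Mathlib

section
/- Let ε > 0 and q : ℤ → (0, ∞) satisfy e^{-ε} ≤ q(n+1)/q(n) ≤ e^ε for all n ∈ ℤ. If q(n) ≤ Q(n) for all n, where q(n) := inf{e^{ε|k|} Q(n+k) : k ∈ ℤ} and Q : ℤ → (0, ∞), then q is the largest function r : ℤ → (0, ∞) satisfying both r(n) ≤ Q(n) and e^{-ε} ≤ r(n+1)/r(n) ≤ e^ε for all n ∈ ℤ. -/
/-- optimality of the tempering kernel: the function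
`q(n) = inf_{k ∈ ℤ} e^{ε|k|} Q(n+k)`, assumed positive, `ε`-tempered and dominated by
`Q`, is the largest positive function `r ≤ Q` with `e^{-ε} ≤ r(n+1)/r(n) ≤ e^ε`. -/
theorem stmt8 (ε : ℝ) (hε : 0 < ε) (Q : ℤ → ℝ) (hQ : ∀ n, 0 < Q n)
    (q : ℤ → ℝ) (hq : ∀ n, q n = ⨅ k : ℤ, Real.exp (ε * |(k : ℝ)|) * Q (n + k))
    (hqpos : ∀ n, 0 < q n)
    (hratio : ∀ n, Real.exp (-ε) ≤ q (n + 1) / q n ∧ q (n + 1) / q n ≤ Real.exp ε)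
    (hdom : ∀ n, q n ≤ Q n) :
    ∀ r : ℤ → ℝ, (∀ n, 0 < r n) → (∀ n, r n ≤ Q n) →
      (∀ n, Real.exp (-ε) ≤ r (n + 1) / r n ∧ r (n + 1) / r n ≤ Real.exp ε) →
      ∀ n, r n ≤ q n := by
  intro r hrpos hrQ hrratio n
  have step1 : ∀ m : ℤ, r m ≤ Real.exp ε * r (m + 1) := by
    intro m
    have h := (hrratio m).1
    have hm := hrpos m
    have h' : Real.exp (-ε) * r m ≤ r (m + 1) :=
      (le_div_iff₀ hm).mp h
    have : Real.exp ε * (Real.exp (-ε) * r m) ≤ Real.exp ε * r (m + 1) :=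
      mul_le_mul_of_nonneg_left h' (Real.exp_pos ε).le
    calc r m = Real.exp ε * (Real.exp (-ε) * r m) := by
          rw [← mul_assoc, ← Real.exp_add]; simp
      _ ≤ Real.exp ε * r (m + 1) := this
  have step2 : ∀ m : ℤ, r (m + 1) ≤ Real.exp ε * r m := by
    intro m
    have h := (hrratio m).2
    have hm := hrpos m
    have := mul_le_mul_of_nonneg_right h hm.le
    rwa [div_mul_cancel₀ _ hm.ne'] at this
  have fwd : ∀ j : ℕ, ∀ m : ℤ, r m ≤ Real.exp (ε * j) * r (m + j) := by
    intro j
    induction j with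
    | zero => intro m; simp
    | succ j ih =>
      intro m
      have harg : m + 1 + (j : ℤ) = m + ((j + 1 : ℕ) : ℤ) := by push_cast; ring
      have hexp : Real.exp ε * Real.exp (ε * j) = Real.exp (ε * ((j + 1 : ℕ) : ℝ)) := by
        rw [← Real.exp_add]; congr 1; push_cast; ring
      calc r m ≤ Real.exp ε * r (m + 1) := step1 m
        _ ≤ Real.exp ε * (Real.exp (ε * j) * r (m + 1 + j)) :=
            mul_le_mul_of_nonneg_left (ih (m + 1)) (Real.exp_pos ε).le
        _ = Real.exp (ε * ((j + 1 : ℕ) : ℝ)) * r (m + ((j + 1 : ℕ) : ℤ)) := by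
            rw [← mul_assoc, hexp, harg]
  have bwd : ∀ j : ℕ, ∀ m : ℤ, r m ≤ Real.exp (ε * j) * r (m - j) := by
    intro j
    induction j with
    | zero => intro m; simp
    | succ j ih =>
      intro m
      have h1 : r m ≤ Real.exp ε * r (m - 1) := by
        have := step2 (m - 1); simpa using this
      have harg : m - 1 - (j : ℤ) = m - ((j + 1 : ℕ) : ℤ) := by push_cast; ring
      have hexp : Real.exp ε * Real.exp (ε * j) = Real.exp (ε * ((j + 1 : ℕ) : ℝ)) := by
        rw [← Real.exp_add]; congr 1; push_cast; ring
      calc r m ≤ Real.exp ε * r (m - 1) := h1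
        _ ≤ Real.exp ε * (Real.exp (ε * j) * r (m - 1 - j)) :=
            mul_le_mul_of_nonneg_left (ih (m - 1)) (Real.exp_pos ε).le
        _ = Real.exp (ε * ((j + 1 : ℕ) : ℝ)) * r (m - ((j + 1 : ℕ) : ℤ)) := by
            rw [← mul_assoc, hexp, harg]
  have key : ∀ k : ℤ, r n ≤ Real.exp (ε * |(k : ℝ)|) * Q (n + k) := by
    intro k
    rcases le_or_gt 0 k with hk | hk
    · obtain ⟨j, rfl⟩ : ∃ j : ℕ, k = (j : ℤ) := ⟨k.toNat, by omega⟩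
      have habs : |((j : ℤ) : ℝ)| = (j : ℝ) := by push_cast; simp
      calc r n ≤ Real.exp (ε * j) * r (n + j) := fwd j n
        _ ≤ Real.exp (ε * j) * Q (n + j) :=
            mul_le_mul_of_nonneg_left (hrQ _) (Real.exp_pos _).le
        _ = Real.exp (ε * |((j : ℤ) : ℝ)|) * Q (n + j) := by rw [habs]
    · obtain ⟨j, rfl⟩ : ∃ j : ℕ, k = -(j : ℤ) := ⟨k.natAbs, by omega⟩
      have habs : |((-(j : ℤ) : ℤ) : ℝ)| = (j : ℝ) := by push_cast; simp
      calc r n ≤ Real.exp (ε * j) * r (n - j) := bwd j n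
        _ ≤ Real.exp (ε * j) * Q (n - j) :=
            mul_le_mul_of_nonneg_left (hrQ _) (Real.exp_pos _).le
        _ = Real.exp (ε * |((-(j : ℤ) : ℤ) : ℝ)|) * Q (n + -(j : ℤ)) := by
            rw [habs, sub_eq_add_neg]
  rw [hq n]
  exact le_ciInf key
end

section
/- Let 𝒢 be a finite oriented graph with vertex set 𝓡 of cardinality N, let (Σ̂, σ̂) be the associated two-sided topological Markov shift, and let π̂ : Σ̂ → M be a map to a set M satisfying: there is a reflexive symmetric relation ∼ on 𝓡 such that (i) π̂(R̄) = π̂(S̄) implies R_n ∼ S_n for all n, and (ii) whenever R_n → ⋯ → R_m and S_n → ⋯ → S_m are admissible paths with R_n = S_n, R_m = S_m and R_k ∼ S_k for all n ≤ k ≤ m, one has R_k = S_k for all n ≤ k ≤ m. Then for every x ∈ M, the fiber π̂^{-1}(x) has cardinality at most N². -/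
/-- the diamond argument: for a topological Markov shift over a finite
vertex set of cardinality `N` and a projection `π̂` satisfying the Bowen relation
hypotheses (i) and (ii), every fiber of `π̂` has at most `N²` elements. -/
theorem stmt17 {R M : Type*} [Fintype R] (Edge : R → R → Prop)
    (πhat : {x : ℤ → R // ∀ n, Edge (x n) (x (n + 1))} → M)
    (sim : R → R → Prop) (hrefl : ∀ r, sim r r) (hsymm : ∀ r s, sim r s → sim s r)
    (hi : ∀ x y, πhat x = πhat y → ∀ n : ℤ, sim (x.1 n) (y.1 n))
    (hii : ∀ (x y : {x : ℤ → R // ∀ n, Edge (x n) (x (n + 1))}) (n m : ℤ), n ≤ m →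
      x.1 n = y.1 n → x.1 m = y.1 m →
      (∀ k : ℤ, n ≤ k → k ≤ m → sim (x.1 k) (y.1 k)) →
      ∀ k : ℤ, n ≤ k → k ≤ m → x.1 k = y.1 k) :
    ∀ z : M, (πhat ⁻¹' {z}).Finite ∧ (πhat ⁻¹' {z}).ncard ≤ (Fintype.card R) ^ 2 := by
  classical
  intro z
  -- key: every finite subset of the fiber has card ≤ N²
  have key : ∀ S : Finset {x : ℤ → R // ∀ n, Edge (x n) (x (n + 1))}, ↑S ⊆ πhat ⁻¹' {z} → S.card ≤ (Fintype.card R) ^ 2 := by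
    intro S hS
    by_contra hlt
    push_neg at hlt
    -- choose a differing coordinate for each pair of distinct elements
    have hdiff : ∀ x y : {x : ℤ → R // ∀ n, Edge (x n) (x (n + 1))}, x ≠ y → ∃ k : ℤ, x.1 k ≠ y.1 k := by
      intro x y hxy
      by_contra h
      push_neg at h
      exact hxy (Subtype.ext (funext h))
    let d : {x : ℤ → R // ∀ n, Edge (x n) (x (n + 1))} × {x : ℤ → R // ∀ n, Edge (x n) (x (n + 1))} → ℕ := fun p =>
      if h : p.1 ≠ p.2 then (Classical.choose (hdiff p.1 p.2 h)).natAbs else 0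
    let T : ℕ := (S ×ˢ S).sup d
    have hdT' : ∀ x ∈ S, ∀ y ∈ S, ∀ h : x ≠ y,
        (Classical.choose (hdiff x y h)).natAbs ≤ T := by
      intro x hx y hy h
      have : d (x, y) ≤ T := Finset.le_sup (Finset.mk_mem_product hx hy)
      simpa [d, h] using this
    clear_value T
    clear d
    -- pigeonhole on coordinates -(T+1) and T+1
    have hcard : Fintype.card (R × R) * 1 < S.card := by
      simpa [Fintype.card_prod, sq] using hlt
    obtain ⟨r, hr, hrlt⟩ := Finset.exists_lt_card_fiber_of_mul_lt_card_of_maps_to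
      (f := fun x : {x : ℤ → R // ∀ n, Edge (x n) (x (n + 1))} => ((x.1 (-(T + 1 : ℕ) : ℤ), x.1 ((T + 1 : ℕ) : ℤ)) : R × R))
      (fun x _ => Finset.mem_univ _) hcard
    obtain ⟨x, hx, y, hy, hxy⟩ := Finset.one_lt_card.mp hrlt
    simp only [Finset.mem_filter] at hx hy
    have hxS : x ∈ S := hx.1
    have hyS : y ∈ S := hy.1
    have hfeq : (x.1 (-(T + 1 : ℕ) : ℤ), x.1 ((T + 1 : ℕ) : ℤ))
        = (y.1 (-(T + 1 : ℕ) : ℤ), y.1 ((T + 1 : ℕ) : ℤ)) := by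
      rw [hx.2, hy.2]
    have h1 : x.1 (-(T + 1 : ℕ) : ℤ) = y.1 (-(T + 1 : ℕ) : ℤ) := congrArg Prod.fst hfeq
    have h2 : x.1 ((T + 1 : ℕ) : ℤ) = y.1 ((T + 1 : ℕ) : ℤ) := congrArg Prod.snd hfeq
    have hπ : πhat x = πhat y := by
      have hx' : πhat x = z := hS hxS
      have hy' : πhat y = z := hS hyS
      rw [hx', hy']
    have hsim := hi x y hπ
    have hle : (-(T + 1 : ℕ) : ℤ) ≤ ((T + 1 : ℕ) : ℤ) := by clear * -; omega
    have heq := hii x y (-(T + 1 : ℕ) : ℤ) ((T + 1 : ℕ) : ℤ) hle h1 h2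
      (fun k _ _ => hsim k)
    -- the chosen differing coordinate lies in the interval: contradiction
    obtain k := Classical.choose (hdiff x y hxy)
    have hk := Classical.choose_spec (hdiff x y hxy)
    set k := Classical.choose (hdiff x y hxy) with hkdef
    have hkT : k.natAbs ≤ T := hdT' x hxS y hyS hxy
    have hbound : (-(T + 1 : ℕ) : ℤ) ≤ k ∧ k ≤ ((T + 1 : ℕ) : ℤ) := by
      clear * - hkT; constructor <;> omega
    exact hk (heq k hbound.1 hbound.2)
  have hfin : (πhat ⁻¹' {z}).Finite := by
    by_contra hinf
    have hinf' : (πhat ⁻¹' {z}).Infinite := hinf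
    obtain ⟨t, hts, htcard⟩ := hinf'.exists_subset_card_eq ((Fintype.card R) ^ 2 + 1)
    have := key t hts
    omega
  refine ⟨hfin, ?_⟩
  rw [Set.ncard_eq_toFinset_card _ hfin]
  exact key _ (by simp)
end

section
/- Let F, G : [−Q, Q] → ℝ be C¹ functions with |F(0)| ≤ δ, |G(0)| ≤ δ, ‖F'‖_{C⁰} ≤ γ and ‖G'‖_{C⁰} ≤ γ, where γ < 1 and δ ≤ (1−γ)Q/2. Then the graphs {(t, F(t)) : |t| ≤ Q} and {(G(s), s) : |s| ≤ Q} intersect in exactly one point (t₀, F(t₀)), and this point satisfies |t₀| ≤ 2δ/(1−γ) and |F(t₀)| ≤ 2δ/(1−γ). -/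
/-- transversal intersection of an almost-horizontal graph
`{(t, F t)}` and an almost-vertical graph `{(G s, s)}` over `[-Q, Q]`: there is a
unique intersection point `(t₀, F t₀)`, and it satisfies `|t₀|, |F t₀| ≤ 2δ/(1-γ)`. -/
theorem stmt19 (Q δ γ : ℝ) (hQ : 0 < Q) (hδ : 0 ≤ δ) (hγ : 0 ≤ γ) (hγ1 : γ < 1)
    (hδQ : δ ≤ (1 - γ) * Q / 2)
    (F G F' G' : ℝ → ℝ)
    (hF : ∀ t ∈ Set.Icc (-Q) Q, HasDerivWithinAt F (F' t) (Set.Icc (-Q) Q) t)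
    (hG : ∀ t ∈ Set.Icc (-Q) Q, HasDerivWithinAt G (G' t) (Set.Icc (-Q) Q) t)
    (hF' : ∀ t ∈ Set.Icc (-Q) Q, |F' t| ≤ γ) (hG' : ∀ t ∈ Set.Icc (-Q) Q, |G' t| ≤ γ)
    (hF0 : |F 0| ≤ δ) (hG0 : |G 0| ≤ δ) :
    (∃! t₀ : ℝ, t₀ ∈ Set.Icc (-Q) Q ∧ F t₀ ∈ Set.Icc (-Q) Q ∧ G (F t₀) = t₀) ∧
    (∀ t₀ : ℝ, t₀ ∈ Set.Icc (-Q) Q → F t₀ ∈ Set.Icc (-Q) Q → G (F t₀) = t₀ →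
      |t₀| ≤ 2 * δ / (1 - γ) ∧ |F t₀| ≤ 2 * δ / (1 - γ)) := by
  set I := Set.Icc (-Q) Q with hI
  have hconv : Convex ℝ I := convex_Icc _ _
  have h0I : (0 : ℝ) ∈ I := by constructor <;> simp [hQ.le] <;> linarith
  -- Lipschitz estimates
  have hFlip : ∀ x ∈ I, ∀ y ∈ I, |F y - F x| ≤ γ * |y - x| := fun x hx y hy =>
    hconv.norm_image_sub_le_of_norm_hasDerivWithin_le hF hF' hx hy
  have hGlip : ∀ x ∈ I, ∀ y ∈ I, |G y - G x| ≤ γ * |y - x| := fun x hx y hy =>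
    hconv.norm_image_sub_le_of_norm_hasDerivWithin_le hG hG' hx hy
  -- F and G map I into I
  have habs : ∀ t : ℝ, t ∈ I ↔ |t| ≤ Q := fun t => abs_le.symm
  have hQbnd : δ + γ * Q ≤ Q := by nlinarith
  have hFmap : ∀ t ∈ I, F t ∈ I := by
    intro t ht
    have h1 : |F t - F 0| ≤ γ * |t - 0| := hFlip 0 h0I t ht
    have h2 : |t| ≤ Q := (habs t).mp ht
    rw [habs]
    have : |F t| ≤ |F t - F 0| + |F 0| := by
      calc |F t| = |(F t - F 0) + F 0| := by ring_nf
        _ ≤ |F t - F 0| + |F 0| := abs_add_le _ _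
    simp only [sub_zero] at h1
    nlinarith [abs_nonneg t]
  have hGmap : ∀ t ∈ I, G t ∈ I := by
    intro t ht
    have h1 : |G t - G 0| ≤ γ * |t - 0| := hGlip 0 h0I t ht
    have h2 : |t| ≤ Q := (habs t).mp ht
    rw [habs]
    have : |G t| ≤ |G t - G 0| + |G 0| := by
      calc |G t| = |(G t - G 0) + G 0| := by ring_nf
        _ ≤ |G t - G 0| + |G 0| := abs_add_le _ _
    simp only [sub_zero] at h1
    nlinarith [abs_nonneg t]
  -- continuity
  have hFc : ContinuousOn F I := fun t ht => (hF t ht).continuousWithinAt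
  have hGc : ContinuousOn G I := fun t ht => (hG t ht).continuousWithinAt
  have hHc : ContinuousOn (fun t => G (F t) - t) I := by
    exact ((hGc.comp hFc hFmap).sub continuousOn_id)
  -- existence via IVT
  have hQI : Q ∈ I := by constructor <;> linarith
  have hmQI : -Q ∈ I := by constructor <;> linarith
  have hex : ∃ t₀ ∈ I, G (F t₀) = t₀ := by
    have hle : (-Q : ℝ) ≤ Q := by linarith
    have h1 : (0:ℝ) ∈ Set.Icc ((fun t => G (F t) - t) Q) ((fun t => G (F t) - t) (-Q)) := by
      have hq : G (F Q) ∈ I := hGmap _ (hFmap _ hQI)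
      have hmq : G (F (-Q)) ∈ I := hGmap _ (hFmap _ hmQI)
      constructor
      · simp only; linarith [hq.2]
      · simp only; linarith [hmq.1]
    have := intermediate_value_Icc' hle hHc h1
    obtain ⟨t₀, ht₀, heq⟩ := this
    exact ⟨t₀, ht₀, by simp only at heq; linarith⟩
  -- bound for any fixed point
  have hbnd : ∀ t₀ : ℝ, t₀ ∈ I → F t₀ ∈ I → G (F t₀) = t₀ →
      |t₀| ≤ 2 * δ / (1 - γ) ∧ |F t₀| ≤ 2 * δ / (1 - γ) := by
    intro t₀ ht₀ hFt₀ heq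
    have h1 : |F t₀ - F 0| ≤ γ * |t₀| := by
      have := hFlip 0 h0I t₀ ht₀; simpa using this
    have h2 : |G (F t₀) - G 0| ≤ γ * |F t₀| := by
      have := hGlip 0 h0I (F t₀) hFt₀; simpa using this
    have hF1 : |F t₀| ≤ δ + γ * |t₀| := by
      calc |F t₀| = |(F t₀ - F 0) + F 0| := by ring_nf
        _ ≤ |F t₀ - F 0| + |F 0| := abs_add_le _ _
        _ ≤ γ * |t₀| + δ := by linarith
        _ = δ + γ * |t₀| := by ring
    have hG1 : |t₀| ≤ δ + γ * |F t₀| := by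
      calc |t₀| = |(G (F t₀) - G 0) + G 0| := by rw [heq] at *; ring_nf
        _ ≤ |G (F t₀) - G 0| + |G 0| := abs_add_le _ _
        _ ≤ γ * |F t₀| + δ := by linarith
        _ = δ + γ * |F t₀| := by ring
    have hγ2 : (0:ℝ) < 1 - γ := by linarith
    have ht : |t₀| ≤ δ / (1 - γ) := by
      rw [le_div_iff₀ hγ2]
      nlinarith [abs_nonneg t₀, abs_nonneg (F t₀)]
    have hf : |F t₀| ≤ δ / (1 - γ) := by
      rw [le_div_iff₀ hγ2]
      nlinarith [abs_nonneg t₀, abs_nonneg (F t₀)]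
    have hmono : δ / (1 - γ) ≤ 2 * δ / (1 - γ) := by
      rw [div_le_div_iff₀ hγ2 hγ2]; nlinarith
    exact ⟨ht.trans hmono, hf.trans hmono⟩
  refine ⟨?_, hbnd⟩
  obtain ⟨t₀, ht₀, heq⟩ := hex
  refine ⟨t₀, ⟨ht₀, hFmap _ ht₀, heq⟩, ?_⟩
  rintro t₁ ⟨ht₁, hFt₁, heq₁⟩
  have h1 : |G (F t₁) - G (F t₀)| ≤ γ * |F t₁ - F t₀| := hGlip _ (hFmap _ ht₀) _ hFt₁
  have h2 : |F t₁ - F t₀| ≤ γ * |t₁ - t₀| := hFlip _ ht₀ _ ht₁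
  have h3 : |t₁ - t₀| ≤ γ * γ * |t₁ - t₀| := by
    calc |t₁ - t₀| = |G (F t₁) - G (F t₀)| := by rw [heq₁, heq]
      _ ≤ γ * |F t₁ - F t₀| := h1
      _ ≤ γ * (γ * |t₁ - t₀|) := by nlinarith
      _ = γ * γ * |t₁ - t₀| := by ring
  have hgg : γ * γ < 1 := by nlinarith
  have : |t₁ - t₀| = 0 := by nlinarith [abs_nonneg (t₁ - t₀), hgg]
  have := abs_eq_zero.mp this
  linarith
end
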